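/- For every subgroup T = {0, α, β, α+β} ⊆ (ℤ/2ℤ)^g of order at most 4, the polynomial p̃_{T,χ}(v) := P_T(…, v_{σ0}, …) − P_T(…, v_{σ1}, …) in the 2^{g+1} variables v_τ, τ ∈ (ℤ/2ℤ)^{g+1}, transforms under the Heisenberg group H_{g+1} by the character χ: it is invariant under all sign changes v_τ ↦ (−1)^{τ·a} v_τ, and under the translation v_τ ↦ v_{τ+b} it is multiplied by (−1)^{b_{g+1}}, for all a, b ∈ (ℤ/2ℤ)^{g+1}. -/

import Mathlib

open MvPolynomial

/-- The group `(ℤ/2ℤ)^g`. -/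
abbrev Vg (g : ℕ) : Type := Fin g → ZMod 2

instance (g : ℕ) : Finite (AddSubgroup (Vg g)) :=
  Finite.of_injective (fun T => (T : Set (Vg g))) SetLike.coe_injective

/-- The subgroups of `(ℤ/2ℤ)^g` of order at most four; these index the variables `p_T`. -/
abbrev SmallSubgroup (g : ℕ) : Type := {T : AddSubgroup (Vg g) // Nat.card T ≤ 4}

noncomputable instance (g : ℕ) : Fintype (SmallSubgroup g) := Fintype.ofFinite _

/-- For a subgroup `T = {0, α, β, α+β}` of order at most `4`, the Heisenberg-invariant
quartic `P_T := ∑_ρ x_ρ x_{ρ+α} x_{ρ+β} x_{ρ+α+β}`, written intrinsically as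
`∑_ρ (∏_{t ∈ T} x_{ρ+t})^{4/|T|}`. -/
noncomputable def PT {g : ℕ} (T : AddSubgroup (Vg g)) : MvPolynomial (Vg g) ℂ :=
  letI := Classical.decPred (fun t : Vg g => t ∈ T)
  ∑ ρ : Vg g,
    (∏ t ∈ Finset.univ.filter (fun t : Vg g => t ∈ T), X (ρ + t)) ^ (4 / Nat.card T)

/-- `p̃_{T,χ}(v) := P_T(…, v_{σ0}, …) − P_T(…, v_{σ1}, …)`, a quartic in the `2^{g+1}`
variables `v_τ`, `τ ∈ (ℤ/2ℤ)^{g+1}`. -/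
noncomputable def ptilde {g : ℕ} (T : AddSubgroup (Vg g)) : MvPolynomial (Vg (g + 1)) ℂ :=
  rename (fun σ : Vg g => Fin.snoc σ (0 : ZMod 2)) (PT T)
    - rename (fun σ : Vg g => Fin.snoc σ (1 : ZMod 2)) (PT T)

/-!
On the slice `σ ↦ (σ, ε)` the sign change `v_τ ↦ (-1)^{τ·a} v_τ`, or indeed any character `ψ`
of `(ℤ/2ℤ)^{g+1}`, reads `x_σ ↦ c φ(σ) x_σ` with `φ` a character of `(ℤ/2ℤ)^g` and `c⁴ = 1`.
It multiplies the monomial `(∏_{t ∈ T} x_{ρ+t})^{4/|T|}` of `P_T` by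
`c^{4k} φ(ρ)^{4k} φ((4/|T|) ∑_{t ∈ T} t)`, where `|T| · (4/|T|) = 4k`. This is `1`: either
`|T| ∈ {1, 2, 4}` (`|T| = 3` is impossible), or `4/|T| = 0`; characters of an elementary abelian
`2`-group square to `1`; and the elements of a Klein four-group add up to `0`.

A translation by `b` maps the slice `ε` to the slice `ε + b_{g+1}` while translating `P_T` by
the first `g` coordinates of `b`, which fixes `P_T`. So it fixes `p̃` or swaps its two terms.
-/

lemma AddChar.map_sum_eq_prod {G M ι : Type*} [AddCommMonoid G] [CommMonoid M] (φ : AddChar G M)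
    (s : Finset ι) (f : ι → G) : φ (∑ i ∈ s, f i) = ∏ i ∈ s, φ (f i) := by
  have := map_prod φ.toMonoidHom (fun i => Multiplicative.ofAdd (f i)) s
  rwa [← ofAdd_sum] at this

section ZModTwoModule

variable {G : Type*} [AddCommGroup G] [Module (ZMod 2) G]

lemma ZModModule.card_ne_three [Finite G] : Nat.card G ≠ 3 := by
  intro h
  obtain ⟨x, hx⟩ := exists_prime_addOrderOf_dvd_card' (G := G) 3 (by rw [h])
  have h2 : addOrderOf x ∣ 2 := addOrderOf_dvd_of_nsmul_eq_zero (ZModModule.char_nsmul_eq_zero 2 x)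
  rw [hx] at h2
  norm_num at h2

lemma ZModModule.sum_univ_eq_zero_of_card_eq_four [Fintype G] (h : Fintype.card G = 4) :
    ∑ x : G, x = 0 := by
  classical
  obtain ⟨α, hα⟩ := Fintype.exists_ne_of_one_lt_card (by omega) (0 : G)
  obtain ⟨β, -, hβ⟩ := Finset.exists_mem_notMem_of_card_lt_card
    (s := ({0, α} : Finset G)) (t := Finset.univ)
    (by rw [Finset.card_univ, h]; exact Finset.card_le_two.trans_lt (by norm_num))
  simp only [Finset.mem_insert, Finset.mem_singleton, not_or] at hβ
  have hαβ : α + β ≠ 0 := fun e =>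
    hβ.2 (by rw [← neg_eq_of_add_eq_zero_right e, ZModModule.neg_eq_self])
  have huniv : Finset.univ = ({0, α, β, α + β} : Finset G) := by
    refine (Finset.eq_univ_of_card _ ?_).symm
    rw [h, Finset.card_insert_of_notMem, Finset.card_insert_of_notMem,
      Finset.card_pair] <;> simp_all [eq_comm]
  calc ∑ x : G, x = α + (β + (α + β)) := by
        rw [huniv, Finset.sum_insert, Finset.sum_insert, Finset.sum_pair] <;> simp_all [eq_comm]
    _ = (α + α) + (β + β) := by abel
    _ = 0 := by simp only [ZModModule.add_self]

lemma ZModModule.card_eq_one_or_two_or_four_or_four_lt [Finite G] :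
    Nat.card G = 1 ∨ Nat.card G = 2 ∨ Nat.card G = 4 ∨ 4 < Nat.card G := by
  have := ZModModule.card_ne_three (G := G)
  have := Nat.card_pos (α := G)
  omega

lemma ZModModule.four_dvd_four_div_card_mul_card [Finite G] :
    4 ∣ 4 / Nat.card G * Nat.card G := by
  rcases ZModModule.card_eq_one_or_two_or_four_or_four_lt (G := G) with h | h | h | h <;>
    simp [h, Nat.div_eq_of_lt]

lemma ZModModule.four_div_card_nsmul_sum_eq_zero [Fintype G] :
    (4 / Nat.card G) • ∑ x : G, x = 0 := by
  rcases ZModModule.card_eq_one_or_two_or_four_or_four_lt (G := G) with h | h | h | h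
  · rw [h, show 4 / 1 = 2 * 2 from rfl, mul_nsmul, ZModModule.char_nsmul_eq_zero]
  · rw [h, show 4 / 2 = 2 from rfl, ZModModule.char_nsmul_eq_zero]
  · rw [h, Nat.div_self (by norm_num), one_nsmul,
      ZModModule.sum_univ_eq_zero_of_card_eq_four (by rwa [← Nat.card_eq_fintype_card])]
  · rw [Nat.div_eq_of_lt h, zero_nsmul]

lemma AddChar.apply_sq_eq_one {M : Type*} [Monoid M] (ψ : AddChar G M) (x : G) : ψ x ^ 2 = 1 := by
  rw [← AddChar.map_nsmul_eq_pow, ZModModule.char_nsmul_eq_zero, AddChar.map_zero_eq_one]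

lemma AddChar.prod_mul_apply_add_pow_four_div_card {M : Type*} [CommMonoid M] (T : AddSubgroup G)
    [Fintype T] (φ : AddChar G M) (c : M) (hc : c ^ 4 = 1) (ρ : G) :
    (∏ t : T, c * φ (ρ + t)) ^ (4 / Nat.card T) = 1 := by
  have hprod : ∏ t : T, c * φ (ρ + t) = (c * φ ρ) ^ Nat.card T * φ ↑(∑ t : T, t) := by
    simp_rw [AddChar.map_add_eq_mul, ← mul_assoc, Finset.prod_mul_distrib, Finset.prod_const,
      Finset.card_univ, Nat.card_eq_fintype_card, AddSubgroup.val_finsetSum, φ.map_sum_eq_prod,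
      mul_pow]
  have hfour : (c * φ ρ) ^ 4 = 1 := by
    rw [mul_pow, hc, one_mul, show 4 = 2 * 2 from rfl, pow_mul, φ.apply_sq_eq_one, one_pow]
  obtain ⟨m, hm⟩ := ZModModule.four_dvd_four_div_card_mul_card (G := T)
  rw [hprod, mul_pow, ← pow_mul, mul_comm (Nat.card T), hm, pow_mul, hfour, one_pow, one_mul,
    ← AddChar.map_nsmul_eq_pow, ← AddSubgroup.coe_nsmul,
    ZModModule.four_div_card_nsmul_sum_eq_zero, AddSubgroup.coe_zero, AddChar.map_zero_eq_one]

end ZModTwoModule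

lemma PT_eq_sum_prod {g : ℕ} (T : AddSubgroup (Vg g)) [Fintype T] :
    PT T = ∑ ρ : Vg g, (∏ t : T, X (ρ + t)) ^ (4 / Nat.card T) := by
  unfold PT
  refine Finset.sum_congr rfl fun ρ _ => ?_
  rw [Finset.prod_subtype (p := (· ∈ T)) _ (fun t => by simp)]

lemma aeval_mul_addChar_smul_X_PT {g : ℕ} (T : AddSubgroup (Vg g)) (φ : AddChar (Vg g) ℂ)
    (c : ℂ) (hc : c ^ 4 = 1) :
    aeval (fun σ => (c * φ σ) • (X σ : MvPolynomial (Vg g) ℂ)) (PT T) = PT T := by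
  have := Fintype.ofFinite T
  simp only [PT_eq_sum_prod, map_sum, map_pow, map_prod, aeval_X, Finset.prod_smul, smul_pow,
    φ.prod_mul_apply_add_pow_four_div_card T c hc, one_smul]

lemma rename_add_right_PT {g : ℕ} (T : AddSubgroup (Vg g)) (c : Vg g) :
    rename (· + c) (PT T) = PT T := by
  have := Fintype.ofFinite T
  simp only [PT_eq_sum_prod, map_sum, map_pow, map_prod, rename_X]
  refine Fintype.sum_equiv (Equiv.addRight c) _ _ fun ρ => ?_
  simp only [Equiv.coe_addRight, add_right_comm]

lemma Fin.snoc_add_snoc {n : ℕ} {α : Type*} [Add α] (x y : Fin n → α) (u v : α) :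
    (Fin.snoc x u + Fin.snoc y v : Fin (n + 1) → α) = Fin.snoc (x + y) (u + v) := by
  ext i
  refine Fin.lastCases ?_ (fun j => ?_) i <;> simp

def snocZeroHom (n : ℕ) : Vg n →+ Vg (n + 1) :=
  AddMonoidHom.mk' (Fin.snoc · 0) fun x y => by rw [Fin.snoc_add_snoc, add_zero]

lemma aeval_addChar_smul_X_rename_snoc_PT {g : ℕ} (T : AddSubgroup (Vg g))
    (ψ : AddChar (Vg (g + 1)) ℂ) (ε : ZMod 2) :
    aeval (fun τ => ψ τ • (X τ : MvPolynomial (Vg (g + 1)) ℂ))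
        (rename (Fin.snoc · ε) (PT T)) = rename (Fin.snoc · ε) (PT T) := by
  have hsplit : ∀ σ : Vg g,
      ψ (Fin.snoc σ ε) = ψ (Fin.snoc 0 ε) * ψ.compAddMonoidHom (snocZeroHom g) σ := fun σ => by
    rw [AddChar.compAddMonoidHom_apply, ← AddChar.map_add_eq_mul]
    simp [snocZeroHom, Fin.snoc_add_snoc]
  have hc : ψ (Fin.snoc 0 ε) ^ 4 = 1 := by
    rw [show 4 = 2 * 2 from rfl, pow_mul, ψ.apply_sq_eq_one, one_pow]
  rw [aeval_rename]
  conv_rhs => rw [← aeval_mul_addChar_smul_X_PT T (ψ.compAddMonoidHom (snocZeroHom g)) _ hc,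
    comp_aeval_apply]
  refine congrArg (aeval · (PT T)) (funext fun σ => ?_)
  rw [Function.comp_apply, hsplit, map_smul, rename_X]

lemma rename_add_rename_snoc_PT {g : ℕ} (T : AddSubgroup (Vg g)) (b : Vg (g + 1))
    (ε : ZMod 2) :
    rename (· + b) (rename (Fin.snoc · ε) (PT T))
      = rename (Fin.snoc · (ε + b (Fin.last g))) (PT T) := by
  have hcomp : (· + b) ∘ (Fin.snoc · ε : Vg g → Vg (g + 1))
      = (Fin.snoc · (ε + b (Fin.last g))) ∘ (· + Fin.init b) := by
    ext1 σ
    conv_lhs => rw [Function.comp_apply, ← Fin.snoc_init_self b]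
    exact Fin.snoc_add_snoc _ _ _ _
  rw [rename_rename, hcomp, ← rename_rename, rename_add_right_PT]

def dotSign {n : ℕ} (a : Vg n) : AddChar (Vg n) ℂ :=
  (AddChar.zmodChar 2 (by norm_num : (-1 : ℂ) ^ 2 = 1)).compAddMonoidHom
    (AddMonoidHom.mk' (· ⬝ᵥ a) fun x y => add_dotProduct x y a)

theorem ptilde_heisenberg_character_general (g : ℕ) (T : AddSubgroup (Vg g)) :
    (∀ a : Vg (g + 1),
      aeval (fun τ : Vg (g + 1) =>
          ((-1 : ℂ) ^ (∑ i, τ i * a i : ZMod 2).val) •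
            (X τ : MvPolynomial (Vg (g + 1)) ℂ)) (ptilde T) = ptilde T) ∧
    (∀ b : Vg (g + 1),
      rename (fun τ : Vg (g + 1) => τ + b) (ptilde T)
        = ((-1 : ℂ) ^ (b (Fin.last g)).val) • ptilde T) := by
  refine ⟨fun a => ?_, fun b => ?_⟩
  · rw [ptilde, map_sub]
    exact congrArg₂ (· - ·) (aeval_addChar_smul_X_rename_snoc_PT T (dotSign a) 0)
      (aeval_addChar_smul_X_rename_snoc_PT T (dotSign a) 1)
  · rw [ptilde, map_sub, rename_add_rename_snoc_PT, rename_add_rename_snoc_PT]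
    obtain h | h : b (Fin.last g) = 0 ∨ b (Fin.last g) = 1 := by
      generalize b (Fin.last g) = e
      revert e
      decide
    · simp [h]
    · simp [h, show (1 + 1 : ZMod 2) = 0 from rfl, show ZMod.val (1 : ZMod 2) = 1 from rfl]

/-- `p̃_{T,χ}` transforms under the Heisenberg group `H_{g+1}` by the character `χ`:
it is invariant under all sign changes `v_τ ↦ (−1)^{τ·a} v_τ`, and the translation
`v_τ ↦ v_{τ+b}` multiplies it by `(−1)^{b_{g+1}}`. -/
theorem ptilde_heisenberg_character (g : ℕ) (T : AddSubgroup (Vg g))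
    (hT : Nat.card T ≤ 4) :
    (∀ a : Vg (g + 1),
      aeval (fun τ : Vg (g + 1) =>
          ((-1 : ℂ) ^ (∑ i, τ i * a i : ZMod 2).val) •
            (X τ : MvPolynomial (Vg (g + 1)) ℂ)) (ptilde T) = ptilde T) ∧
    (∀ b : Vg (g + 1),
      rename (fun τ : Vg (g + 1) => τ + b) (ptilde T)
        = ((-1 : ℂ) ^ (b (Fin.last g)).val) • ptilde T) :=
  ptilde_heisenberg_character_general g T
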